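/- Let c be a cycle point in a min-set M and define Λ(c) = { l₀ + R l₁ + ⋯ + R^k l_k + R^{k+1} c : l₀…l_k ∈ Ω(c) } where Ω(c) is the set of finite words with digits in L not ending in a cycle word for c. Then Λ(c) is the smallest subset of ℝ containing c that satisfies the invariance RΛ + L ⊆ Λ. -/

import Mathlib

open Complex

/-- `m_B(x) = (1/N) ∑_{b ∈ B} e^{2πibx}`. -/
noncomputable def mBg (B : Finset ℤ) (x : ℝ) : ℂ :=
  (∑ b ∈ B, Complex.exp (2 * Real.pi * Complex.I * ((b : ℝ) * x))) / (B.card : ℂ)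

/-- Apply the maps `g_l(t) = (t - l)/R` along a word, first digit first. -/
noncomputable def run (R : ℤ) (c : ℝ) (w : List ℤ) : ℝ :=
  w.foldl (fun t l => (t - (l : ℝ)) / (R : ℝ)) c

/-- A cycle word for `c`: a nonempty word with digits in `L`, with all transitions
possible (`α_l m_B(g_l(t)) ≠ 0`), returning to `c` only at the last step. -/
noncomputable def CycleWord (R : ℤ) (B L : Finset ℤ) (α : ℤ → ℂ) (c : ℝ) (w : List ℤ) :
    Prop :=
  w ≠ [] ∧ (∀ l ∈ w, l ∈ L) ∧ run R c w = c ∧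
  (∀ k : ℕ, k + 1 < w.length → run R c (w.take (k + 1)) ≠ c) ∧
  (∀ k : ℕ, k < w.length → α (w.getD k 0) * mBg B (run R c (w.take (k + 1))) ≠ 0)

/-- `Ω(c)`: finite words with digits in `L` that do not end in a cycle word for `c`. -/
noncomputable def Omega (R : ℤ) (B L : Finset ℤ) (α : ℤ → ℂ) (c : ℝ) (w : List ℤ) :
    Prop :=
  (∀ l ∈ w, l ∈ L) ∧ ¬ ∃ u v : List ℤ, CycleWord R B L α c v ∧ w = u ++ v

/-- `Λ(c) = { l₀ + R l₁ + ⋯ + R^k l_k + R^{k+1} c : l₀…l_k ∈ Ω(c) }`. -/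
noncomputable def Lam (R : ℤ) (B L : Finset ℤ) (α : ℤ → ℂ) (c : ℝ) : Set ℝ :=
  {x | ∃ w : List ℤ, Omega R B L α c w ∧
    x = (∑ i ∈ Finset.range w.length, (R : ℝ) ^ i * (w.getD i 0 : ℝ)) +
        (R : ℝ) ^ w.length * c}

/-- Invariance of a set under the possible transitions. -/
noncomputable def InvSet (R : ℤ) (B L : Finset ℤ) (α : ℤ → ℂ) (M : Set ℝ) : Prop :=
  ∀ t ∈ M, ∀ l ∈ L, α l * mBg B ((t - (l : ℝ)) / (R : ℝ)) ≠ 0 →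
    (t - (l : ℝ)) / (R : ℝ) ∈ M

/-- A min-set: nonempty, finite, invariant, and minimal with these properties. -/
noncomputable def MinSet (R : ℤ) (B L : Finset ℤ) (α : ℤ → ℂ) (M : Set ℝ) : Prop :=
  M.Finite ∧ M.Nonempty ∧ InvSet R B L α M ∧
    ∀ M' ⊆ M, M'.Nonempty → InvSet R B L α M' → M' = M


/-!
Write `⟦w⟧_s = l₀ + R l₁ + ⋯ + R^k l_k + R^{k+1} s` for a word `w = l₀…l_k`, so that
`Λ(c) = {⟦w⟧_c : w ∈ Ω(c)}` and `⟦l w⟧_s = l + R ⟦w⟧_s`. Minimality is then an induction on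
the word. For invariance, prepending a digit `l ∈ L` to a word of `Ω(c)` either gives a word of
`Ω(c)` again or a cycle word `v` for `c`. In the latter case `⟦v⟧_c = c ∈ Λ(c)`: since
`t ↦ R t + l` inverts `g_l`, `⟦v⟧_{g_v(c)} = c` for every word `v`, and `g_v(c) = c` for a
cycle word.
-/

noncomputable def wordVal (R : ℤ) (s : ℝ) (w : List ℤ) : ℝ :=
  (∑ i ∈ Finset.range w.length, (R : ℝ) ^ i * (w.getD i 0 : ℝ)) + (R : ℝ) ^ w.length * s

section

variable {R : ℤ} {B L : Finset ℤ} {α : ℤ → ℂ} {c : ℝ}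

@[simp]
lemma wordVal_nil (R : ℤ) (s : ℝ) : wordVal R s [] = s := by
  simp [wordVal]

lemma wordVal_cons (R : ℤ) (s : ℝ) (l : ℤ) (w : List ℤ) :
    wordVal R s (l :: w) = l + R * wordVal R s w := by
  simp only [wordVal, List.length_cons, Finset.sum_range_succ', List.getD_cons_succ,
    List.getD_cons_zero, pow_succ, pow_zero, mul_add, Finset.mul_sum]
  ring_nf

@[simp]
lemma run_nil (R : ℤ) (t : ℝ) : run R t [] = t := rfl

lemma run_cons (R : ℤ) (t : ℝ) (l : ℤ) (w : List ℤ) :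
    run R t (l :: w) = run R ((t - l) / R) w := rfl

lemma wordVal_run (hR : (R : ℝ) ≠ 0) (w : List ℤ) (t : ℝ) : wordVal R (run R t w) w = t := by
  induction w generalizing t with
  | nil => simp
  | cons l w ih =>
    rw [run_cons, wordVal_cons, ih]
    field_simp
    ring

lemma CycleWord.wordVal_eq (hR : (R : ℝ) ≠ 0) {v : List ℤ} (hv : CycleWord R B L α c v) :
    wordVal R c v = c := by
  conv_lhs => rw [← hv.2.2.1]
  exact wordVal_run hR v c

lemma omega_nil : Omega R B L α c [] :=
  ⟨by simp, fun ⟨_, _, hv, huv⟩ => hv.1 (List.append_eq_nil_iff.mp huv.symm).2⟩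

lemma Omega.of_cons {l : ℤ} {w : List ℤ} (h : Omega R B L α c (l :: w)) :
    Omega R B L α c w :=
  ⟨fun a ha => h.1 a (List.mem_cons_of_mem _ ha),
    fun ⟨u, v, hv, huv⟩ => h.2 ⟨l :: u, v, hv, by rw [huv, List.cons_append]⟩⟩

lemma Omega.cons_or_cycleWord {l : ℤ} {w : List ℤ} (hw : Omega R B L α c w) (hl : l ∈ L) :
    Omega R B L α c (l :: w) ∨ CycleWord R B L α c (l :: w) := by
  by_contra! h
  apply h.1
  refine ⟨List.forall_mem_cons.mpr ⟨hl, hw.1⟩, ?_⟩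
  rintro ⟨u, v, hv, huv⟩
  cases u with
  | nil => exact h.2 (huv ▸ hv)
  | cons a u => exact hw.2 ⟨u, v, hv, (List.cons_eq_cons.mp huv).2⟩

lemma self_mem_Lam : c ∈ Lam R B L α c :=
  ⟨[], omega_nil, by simp⟩

lemma mul_add_mem_Lam (hR : (R : ℝ) ≠ 0) {x : ℝ} (hx : x ∈ Lam R B L α c) {l : ℤ}
    (hl : l ∈ L) : (R : ℝ) * x + l ∈ Lam R B L α c := by
  obtain ⟨w, hw, rfl⟩ := hx
  change (R : ℝ) * wordVal R c w + l ∈ _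
  rw [add_comm, ← wordVal_cons]
  rcases hw.cons_or_cycleWord hl with hlw | hlw
  · exact ⟨l :: w, hlw, rfl⟩
  · rw [hlw.wordVal_eq hR]
    exact self_mem_Lam

lemma Lam_subset {S : Set ℝ} (hcS : c ∈ S) (hS : ∀ x ∈ S, ∀ l ∈ L, (R : ℝ) * x + l ∈ S) :
    Lam R B L α c ⊆ S := by
  rintro _ ⟨w, hw, rfl⟩
  change wordVal R c w ∈ S
  induction w with
  | nil => simpa using hcS
  | cons l w ih =>
    rw [wordVal_cons, add_comm]
    exact hS _ (ih hw.of_cons) l (hw.1 l List.mem_cons_self)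

end

theorem stmt12_general (R : ℤ) (hR : 2 ≤ R) (B L : Finset ℤ) (α : ℤ → ℂ) (c : ℝ) :
    c ∈ Lam R B L α c ∧
    (∀ x ∈ Lam R B L α c, ∀ l ∈ L, (R : ℝ) * x + (l : ℝ) ∈ Lam R B L α c) ∧
    (∀ S : Set ℝ, c ∈ S → (∀ x ∈ S, ∀ l ∈ L, (R : ℝ) * x + (l : ℝ) ∈ S) →
      Lam R B L α c ⊆ S) := by
  have hR0 : (R : ℝ) ≠ 0 := by exact_mod_cast (by omega : R ≠ 0)
  exact ⟨self_mem_Lam, fun x hx l hl => mul_add_mem_Lam hR0 hx hl,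
    fun S hcS hS => Lam_subset hcS hS⟩

/-- for a cycle point `c` of a min-set `M`, the set `Λ(c)` is the smallest
subset of `ℝ` containing `c` satisfying the invariance `RΛ + L ⊆ Λ`. -/
theorem stmt12 (R : ℤ) (hR : 2 ≤ R) (B L : Finset ℤ) (h0L : (0 : ℤ) ∈ L) (α : ℤ → ℂ)
    (hα0 : α 0 = 1) (M : Set ℝ) (hM : MinSet R B L α M) (c : ℝ) (hc : c ∈ M) :
    c ∈ Lam R B L α c ∧
    (∀ x ∈ Lam R B L α c, ∀ l ∈ L, (R : ℝ) * x + (l : ℝ) ∈ Lam R B L α c) ∧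
    (∀ S : Set ℝ, c ∈ S → (∀ x ∈ S, ∀ l ∈ L, (R : ℝ) * x + (l : ℝ) ∈ S) →
      Lam R B L α c ⊆ S) :=
  stmt12_general R hR B L α c
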